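/- arXiv:2103.07737 — 3 statements merged into one kernel-verified Lean document; each statement's English description precedes it below -/
import Mathlib

section
/- Let σ be a 2-structure and let X ⊊ V(σ) be such that σ[X] is prime and |X̄| ≥ 2. If σ is prime, then there exist distinct v, w ∈ X̄ such that σ[X∪{v,w}] is prime. -/
/-!
Formalization of 2-structures (Ehrenfeucht et al.), modules, primality,
criticality, the outside partition/graph, and (discrete) half graphs.
-/

universe u

variable {V : Type u}

/-- A 2-structure on the vertex type `V`: an equivalence relation on ordered
pairs of (distinct) vertices.  Only its values on off-diagonal pairs matter. -/
structure TwoStructure (V : Type u) where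
  rel : V × V → V × V → Prop
  refl : ∀ p : V × V, p.1 ≠ p.2 → rel p p
  symm : ∀ {p q : V × V}, rel p q → rel q p
  trans : ∀ {p q r : V × V}, rel p q → rel q r → rel p r

namespace TwoStructure

variable (σ : TwoStructure V)

/-- `M` is a module of the induced substructure `σ[W]`. -/
def IsModuleOn (W M : Set V) : Prop :=
  M ⊆ W ∧ ∀ x ∈ M, ∀ y ∈ M, ∀ v ∈ W \ M,
    σ.rel (x, v) (y, v) ∧ σ.rel (v, x) (v, y)

/-- The induced substructure `σ[W]` is prime: it has at least 3 vertices and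
all of its modules are trivial. -/
def IsPrimeOn (W : Set V) : Prop :=
  3 ≤ W.encard ∧ ∀ M : Set V, σ.IsModuleOn W M → M = ∅ ∨ M = W ∨ ∃ v, M = {v}

/-- The induced substructure `σ[W]` is `S`-critical: it is prime and removing
any vertex of `S` destroys primality. -/
def IsCriticalOn (W S : Set V) : Prop :=
  σ.IsPrimeOn W ∧ ∀ v ∈ S, ¬ σ.IsPrimeOn (W \ {v})

/-- `Ext_σ(X)`: the vertices `v ∉ X` with `σ[X ∪ {v}]` prime. -/
def extSet (X : Set V) : Set V := {v | v ∉ X ∧ σ.IsPrimeOn (X ∪ {v})}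

/-- `⟨X⟩_σ`: the vertices `v ∉ X` such that `X` is a module of `σ[X ∪ {v}]`. -/
def innSet (X : Set V) : Set V := {v | v ∉ X ∧ σ.IsModuleOn (X ∪ {v}) X}

/-- `X_σ(α)`: the vertices `v ∉ X` such that `{α, v}` is a module of `σ[X ∪ {v}]`. -/
def attSet (X : Set V) (α : V) : Set V :=
  {v | v ∉ X ∧ σ.IsModuleOn (X ∪ {v}) {α, v}}

/-- The outside partition `p_{(σ, X̄)}`. -/
def pBlocks (X : Set V) : Set (Set V) :=
  {σ.extSet X, σ.innSet X} ∪ (fun α => σ.attSet X α) '' X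

/-- `⟨X⟩_σ^{(e,f)}` where the classes `e` and `f` are given by representative
pairs: vertices `v ∈ ⟨X⟩_σ` with `(v,α) ≡_σ e` and `(α,v) ≡_σ f` for all `α ∈ X`. -/
def innSetC (X : Set V) (e f : V × V) : Set V :=
  {v | v ∈ σ.innSet X ∧ ∀ α ∈ X, σ.rel (v, α) e ∧ σ.rel (α, v) f}

/-- `X_σ^{(e,f)}(α)` where the classes `e` and `f` are given by representative
pairs. -/
def attSetC (X : Set V) (α : V) (e f : V × V) : Set V :=
  {v | v ∈ σ.attSet X α ∧ σ.rel (v, α) e ∧ σ.rel (α, v) f}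

/-- The refined outside partition `q_{(σ, X̄)}`. -/
def qBlocks (X : Set V) : Set (Set V) :=
  {σ.extSet X} ∪ {B | ∃ e f : V × V, B = σ.innSetC X e f}
    ∪ {B | ∃ α ∈ X, ∃ e f : V × V, B = σ.attSetC X α e f}

/-- `q^a`: the blocks of `q_{(σ, X̄)}` other than `Ext_σ(X)` that are not of the
symmetric form `⟨X⟩_σ^{(e,e)}` or `X_σ^{(e,e)}(α)`. -/
def qaBlocks (X : Set V) : Set (Set V) :=
  {B | B ∈ σ.qBlocks X ∧ B ≠ σ.extSet X ∧
    ¬ ∃ e : V × V, B = σ.innSetC X e e ∨ ∃ α ∈ X, B = σ.attSetC X α e e}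

/-- The outside graph `Γ_{(σ, X̄)}`: on the vertex set `X̄ = Xᶜ`, two distinct
vertices `v, w` are adjacent when `σ[X ∪ {v, w}]` is prime.  (Vertices of `X`
are not incident to any edge.) -/
def outsideGraph (X : Set V) : SimpleGraph V where
  Adj v w := v ∉ X ∧ w ∉ X ∧ v ≠ w ∧ σ.IsPrimeOn (X ∪ {v, w})
  symm := by
    constructor
    rintro v w ⟨hv, hw, hvw, hp⟩
    refine ⟨hw, hv, hvw.symm, ?_⟩
    rwa [Set.pair_comm w v]
  loopless := by
    constructor
    rintro v ⟨-, -, h, -⟩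
    exact h rfl

/-- `C` is (the vertex set of) a connected component of the outside graph
`Γ_{(σ, X̄)}` (a component of the graph induced on `X̄`). -/
def IsComponent (X : Set V) (C : Set V) : Prop :=
  ∃ v, v ∉ X ∧ C = {w | (σ.outsideGraph X).Reachable v w}

end TwoStructure

/-- `M` is a module of the subgraph of `G` induced on `W`. -/
def GraphIsModuleOn (G : SimpleGraph V) (W M : Set V) : Prop :=
  M ⊆ W ∧ ∀ v ∈ W \ M, (∀ x ∈ M, G.Adj v x) ∨ (∀ x ∈ M, ¬ G.Adj v x)

/-- The subgraph of `G` induced on `W` is prime. -/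
def GraphIsPrimeOn (G : SimpleGraph V) (W : Set V) : Prop :=
  3 ≤ W.encard ∧ ∀ M : Set V, GraphIsModuleOn G W M → M = ∅ ∨ M = W ∨ ∃ v, M = {v}

/-- The subgraph of `G` induced on `W` is critical: prime, and removing any of
its vertices destroys primality. -/
def GraphIsCriticalOn (G : SimpleGraph V) (W : Set V) : Prop :=
  GraphIsPrimeOn G W ∧ ∀ v ∈ W, ¬ GraphIsPrimeOn G (W \ {v})

/-- The subgraph of `G` induced on `S` contains an induced path `P₅` on five
vertices. -/
def HasInducedP5On (G : SimpleGraph V) (S : Set V) : Prop :=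
  ∃ a b c d e : V, a ∈ S ∧ b ∈ S ∧ c ∈ S ∧ d ∈ S ∧ e ∈ S ∧
    a ≠ b ∧ a ≠ c ∧ a ≠ d ∧ a ≠ e ∧ b ≠ c ∧ b ≠ d ∧ b ≠ e ∧ c ≠ d ∧ c ≠ e ∧ d ≠ e ∧
    G.Adj a b ∧ G.Adj b c ∧ G.Adj c d ∧ G.Adj d e ∧
    ¬ G.Adj a c ∧ ¬ G.Adj a d ∧ ¬ G.Adj a e ∧ ¬ G.Adj b d ∧ ¬ G.Adj b e ∧ ¬ G.Adj c e

/-- `r` is a linear order on the set `X`. -/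
def IsLinearOrderOn (X : Set V) (r : V → V → Prop) : Prop :=
  (∀ x ∈ X, r x x) ∧
  (∀ x ∈ X, ∀ y ∈ X, r x y → r y x → x = y) ∧
  (∀ x ∈ X, ∀ y ∈ X, ∀ z ∈ X, r x y → r y z → r x z) ∧
  (∀ x ∈ X, ∀ y ∈ X, r x y ∨ r y x)

/-- The linear order `r` on `X` is discrete: every element other than the
minimum has an immediate predecessor, and every element other than the maximum
has an immediate successor. -/
def IsDiscreteOn (X : Set V) (r : V → V → Prop) : Prop :=
  (∀ x ∈ X, ¬ (∀ y ∈ X, r x y) →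
    ∃ p ∈ X, p ≠ x ∧ r p x ∧ ∀ z ∈ X, r p z → r z x → z = p ∨ z = x) ∧
  (∀ x ∈ X, ¬ (∀ y ∈ X, r y x) →
    ∃ s ∈ X, s ≠ x ∧ r x s ∧ ∀ z ∈ X, r x z → r z s → z = x ∨ z = s)

/-- `G` is the half graph determined by the bipartition `{X, Y}` of its vertex
set, the linear order `r` on `X`, and the bijection `φ : X → Y`: the edges of
`G` are exactly the pairs `{x, φ x'}` with `x ≤ x'` in `r`. -/
def IsHalfGraphWith (G : SimpleGraph V) (X Y : Set V) (r : V → V → Prop)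
    (φ : V → V) : Prop :=
  Disjoint X Y ∧ X ∪ Y = Set.univ ∧ IsLinearOrderOn X r ∧ Set.BijOn φ X Y ∧
    ∀ u v : V, G.Adj u v ↔ ∃ x ∈ X, ∃ x' ∈ X, r x x' ∧
      ((u = x ∧ v = φ x') ∨ (v = x ∧ u = φ x'))

/-- `G` is a half graph. -/
def IsHalfGraph (G : SimpleGraph V) : Prop :=
  ∃ (X Y : Set V) (r : V → V → Prop) (φ : V → V), IsHalfGraphWith G X Y r φ

/-- `G` is a discrete half graph: a half graph whose defining linear order is
discrete. -/
def IsDiscreteHalfGraph (G : SimpleGraph V) : Prop :=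
  ∃ (X Y : Set V) (r : V → V → Prop) (φ : V → V),
    IsHalfGraphWith G X Y r φ ∧ IsDiscreteOn X r

/-- `G` is bipartite: its vertex set splits into two independent sets. -/
def IsBipartite (G : SimpleGraph V) : Prop :=
  ∃ X Y : Set V, Disjoint X Y ∧ X ∪ Y = Set.univ ∧
    (∀ u ∈ X, ∀ v ∈ X, ¬ G.Adj u v) ∧ (∀ u ∈ Y, ∀ v ∈ Y, ¬ G.Adj u v)

/-!
Suppose no two-vertex extension of `X` is prime. Call `v ∉ X` attached to `α ∈ X` when `{α, v}`
is a module of `σ[X ∪ {v}]`, and inner when `X` is a module of `σ[X ∪ {v}]`. A nontrivial proper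
module of `σ[X ∪ {v, w}]` meets `X` in `∅`, in a singleton or in all of `X`, which leaves a short
list of configurations for `v` and `w`. If some vertex is attached to `α`, these configurations
force every vertex outside `{α} ∪ {v | v attached to α}` to see this set alike, so it is a
nontrivial proper module of `σ`. If no vertex is attached to anything, then `X` together with the
non-inner vertices is such a module when some vertex is inner, and `X̄` is one otherwise.
-/

namespace TwoStructure

open Set

variable (σ : TwoStructure V)

def Alike (u a b : V) : Prop :=
  σ.rel (a, u) (b, u) ∧ σ.rel (u, a) (u, b)

/-- `v ∈ σ.attSet X α` with `α ∈ X`, spelled out. -/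
def IsAttached (X : Set V) (α v : V) : Prop :=
  v ∉ X ∧ α ∈ X ∧ ∀ u ∈ X, u ≠ α → σ.Alike u α v

/-- `v ∈ σ.innSet X`, spelled out. -/
def IsInner (X : Set V) (v : V) : Prop :=
  v ∉ X ∧ ∀ x ∈ X, ∀ y ∈ X, σ.Alike v x y

def AlikeOn (X : Set V) (v w : V) : Prop :=
  ∀ x ∈ X, σ.Alike x v w

variable {σ} {X Y W M : Set V} {a b c u v w x y α β : V}

lemma Alike.symm (h : σ.Alike u a b) : σ.Alike u b a :=
  ⟨σ.symm h.1, σ.symm h.2⟩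

lemma Alike.trans (h : σ.Alike u a b) (h' : σ.Alike u b c) : σ.Alike u a c :=
  ⟨σ.trans h.1 h'.1, σ.trans h.2 h'.2⟩

lemma alike_refl (h : u ≠ a) : σ.Alike u a a :=
  ⟨σ.refl _ h.symm, σ.refl _ h⟩

/-- `(x,a) ≡ (x,b) ≡ (y,b) ≡ (y,a)`, and dually. -/
lemma alike_exchange (hx : σ.Alike x a b) (hy : σ.Alike y a b) (hb : σ.Alike b x y) :
    σ.Alike a x y :=
  ⟨σ.trans hx.2 (σ.trans hb.1 (σ.symm hy.2)), σ.trans hx.1 (σ.trans hb.2 (σ.symm hy.1))⟩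

lemma exists_mem_ne_ne_of_three_le_encard (h : 3 ≤ X.encard) (a b : V) :
    ∃ c ∈ X, c ≠ a ∧ c ≠ b := by
  by_contra! hX
  have hsub : X ⊆ {a, b} := fun c hc => by
    by_cases hca : c = a
    · exact Or.inl hca
    · exact Or.inr (hX c hc hca)
  have := h.trans ((encard_le_encard hsub).trans (encard_insert_le _ _))
  norm_num at this

lemma isModuleOn_of_forall_alike (hMW : M ⊆ W) (m₀ : V)
    (h : ∀ u ∈ W \ M, ∀ m ∈ M, σ.Alike u m m₀) : σ.IsModuleOn W M :=
  ⟨hMW, fun x hx y hy u hu => (h u hu x hx).trans (h u hu y hy).symm⟩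

lemma IsModuleOn.inter (hM : σ.IsModuleOn W M) (hYW : Y ⊆ W) : σ.IsModuleOn Y (M ∩ Y) :=
  ⟨inter_subset_right, fun x hx y hy u hu =>
    hM.2 x hx.1 y hy.1 u ⟨hYW hu.1, fun h => hu.2 ⟨h, hu.1⟩⟩⟩

lemma IsModuleOn.isInner (hM : σ.IsModuleOn W M) (hYM : Y ⊆ M) (hw : w ∈ W) (hwM : w ∉ M) :
    σ.IsInner Y w :=
  ⟨fun h => hwM (hYM h), fun x hx y hy => hM.2 x (hYM hx) y (hYM hy) w ⟨hw, hwM⟩⟩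

lemma IsModuleOn.isAttached (hM : σ.IsModuleOn W M) (hXW : X ⊆ W) (hMX : M ∩ X = {β})
    (hv : v ∈ M) (hvX : v ∉ X) : σ.IsAttached X β v := by
  have hβ : β ∈ M ∩ X := hMX ▸ mem_singleton β
  refine ⟨hvX, hβ.2, fun u hu huβ => hM.2 β hβ.1 v hv u ⟨hXW hu, fun huM => huβ ?_⟩⟩
  have hu' : u ∈ M ∩ X := ⟨huM, hu⟩
  rwa [hMX, mem_singleton_iff] at hu'

lemma isPrimeOn_iff :
    σ.IsPrimeOn W ↔ 3 ≤ W.encard ∧ ∀ M, σ.IsModuleOn W M → M.Nontrivial → W ⊆ M := by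
  refine and_congr_right fun _ => forall_congr' fun M => imp_congr_right fun hM => ?_
  constructor
  · rintro (rfl | rfl | ⟨v, rfl⟩) hnt
    exacts [absurd hnt not_nontrivial_empty, subset_rfl, absurd hnt not_nontrivial_singleton]
  · intro h
    by_cases hnt : M.Nontrivial
    · exact Or.inr (Or.inl (hM.1.antisymm (h hnt)))
    · rcases (not_nontrivial_iff.1 hnt).eq_empty_or_singleton with h0 | h1
      exacts [Or.inl h0, Or.inr (Or.inr h1)]

lemma IsPrimeOn.subset_of_isModuleOn (hP : σ.IsPrimeOn W) (hM : σ.IsModuleOn W M)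
    (hnt : M.Nontrivial) : W ⊆ M :=
  (isPrimeOn_iff.1 hP).2 M hM hnt

lemma IsInner.mono (h : σ.IsInner Y v) (hXY : X ⊆ Y) : σ.IsInner X v :=
  ⟨fun hv => h.1 (hXY hv), fun x hx y hy => h.2 x (hXY hx) y (hXY hy)⟩

lemma IsInner.of_alikeOn (hw : σ.IsInner X w) (hv : v ∉ X) (hE : σ.AlikeOn X v w) :
    σ.IsInner X v :=
  ⟨hv, fun x hx y hy => alike_exchange (hE x hx) (hE y hy) (hw.2 x hx y hy)⟩

lemma IsAttached.of_alikeOn (hv : σ.IsAttached X α v) (hw : w ∉ X) (hE : σ.AlikeOn X v w) :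
    σ.IsAttached X α w :=
  ⟨hw, hv.2.1, fun u hu huα => (hv.2.2 u hu huα).trans (hE u hu)⟩

lemma IsAttached.eq (hX : σ.IsPrimeOn X) (hα : σ.IsAttached X α v) (hβ : σ.IsAttached X β v) :
    α = β := by
  by_contra hne
  have hM : σ.IsModuleOn X {α, β} := by
    refine isModuleOn_of_forall_alike (pair_subset hα.2.1 hβ.2.1) α fun u hu m hm => ?_
    have huα : u ≠ α := fun h => hu.2 (Or.inl h)
    have huβ : u ≠ β := fun h => hu.2 (Or.inr h)
    obtain rfl | rfl := hm
    · exact alike_refl huα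
    · exact ((hα.2.2 u hu.1 huα).trans (hβ.2.2 u hu.1 huβ).symm).symm
  obtain ⟨γ, hγ, hγα, hγβ⟩ := exists_mem_ne_ne_of_three_le_encard hX.1 α β
  rcases hX.subset_of_isModuleOn hM ⟨α, Or.inl rfl, β, Or.inr rfl, hne⟩ hγ with h | h
  exacts [hγα h, hγβ h]

lemma IsInner.not_isAttached (hX : σ.IsPrimeOn X) (hI : σ.IsInner X v) :
    ¬ σ.IsAttached X α v := by
  intro hA
  have hM : σ.IsModuleOn X (X \ {α}) := by
    refine ⟨sdiff_subset, fun x hx y hy u hu => ?_⟩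
    obtain rfl : u = α := by_contra fun h => hu.2 ⟨hu.1, h⟩
    exact alike_exchange (hA.2.2 x hx.1 hx.2) (hA.2.2 y hy.1 hy.2) (hI.2 x hx.1 y hy.1)
  obtain ⟨γ, hγ, hγα, -⟩ := exists_mem_ne_ne_of_three_le_encard hX.1 α α
  obtain ⟨δ, hδ, hδα, hδγ⟩ := exists_mem_ne_ne_of_three_le_encard hX.1 α γ
  exact (hX.subset_of_isModuleOn hM ⟨γ, ⟨hγ, hγα⟩, δ, ⟨hδ, hδα⟩, hδγ.symm⟩ hA.2.1).2 rfl

lemma IsModuleOn.cases_of_union_pair (hX : σ.IsPrimeOn X) (hv : v ∉ X) (hw : w ∉ X)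
    (hM : σ.IsModuleOn (X ∪ {v, w}) M) (hnt : M.Nontrivial) (hWM : ¬ X ∪ {v, w} ⊆ M) :
    σ.AlikeOn X v w ∨
      (∃ β, σ.IsAttached X β v ∧ (σ.IsAttached X β w ∨ σ.Alike w β v)) ∨
      (∃ β, σ.IsAttached X β w ∧ σ.Alike v β w) ∨
      (σ.IsInner X v ∧ σ.IsInner X w) ∨ σ.IsInner (insert v X) w ∨ σ.IsInner (insert w X) v := by
  have hXW : X ⊆ X ∪ {v, w} := subset_union_left
  have hvW : v ∈ X ∪ {v, w} := Or.inr (Or.inl rfl)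
  have hwW : w ∈ X ∪ {v, w} := Or.inr (Or.inr rfl)
  have hMsub : M ⊆ (M ∩ X) ∪ {v, w} := fun m hm => by
    rcases hM.1 hm with h | h
    exacts [Or.inl ⟨hm, h⟩, Or.inr h]
  by_cases htr : (M ∩ X).Nontrivial
  · have hXM : X ⊆ M := fun x hx => (hX.subset_of_isModuleOn (hM.inter hXW) htr hx).1
    by_cases hvM : v ∈ M
    · have hwM : w ∉ M := fun hwM => hWM (union_subset hXM (pair_subset hvM hwM))
      exact Or.inr (Or.inr (Or.inr (Or.inr (Or.inl (hM.isInner (insert_subset hvM hXM) hwW hwM)))))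
    by_cases hwM : w ∈ M
    · exact Or.inr (Or.inr (Or.inr (Or.inr (Or.inr (hM.isInner (insert_subset hwM hXM) hvW hvM)))))
    · exact Or.inr (Or.inr (Or.inr (Or.inl ⟨hM.isInner hXM hvW hvM, hM.isInner hXM hwW hwM⟩)))
  rcases (not_nontrivial_iff.1 htr).eq_empty_or_singleton with h0 | ⟨β, hβ⟩
  · have hvwM : v ∈ M ∧ w ∈ M := by
      obtain ⟨a, ha, b, hb, hab⟩ := hnt
      rw [h0, empty_union] at hMsub
      rcases hMsub ha with rfl | rfl <;> rcases hMsub hb with rfl | rfl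
      exacts [absurd rfl hab, ⟨ha, hb⟩, ⟨hb, ha⟩, absurd rfl hab]
    refine Or.inl fun x hx => hM.2 v hvwM.1 w hvwM.2 x ⟨hXW hx, fun hxM => ?_⟩
    exact (h0 ▸ (⟨hxM, hx⟩ : x ∈ M ∩ X) : x ∈ (∅ : Set V))
  · have hβM : β ∈ M := (hβ ▸ mem_singleton β : β ∈ M ∩ X).1
    by_cases hvM : v ∈ M
    · refine Or.inr (Or.inl ⟨β, hM.isAttached hXW hβ hvM hv, ?_⟩)
      by_cases hwM : w ∈ M
      exacts [Or.inl (hM.isAttached hXW hβ hwM hw), Or.inr (hM.2 β hβM v hvM w ⟨hwW, hwM⟩)]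
    · have hwM : w ∈ M := by
        by_contra hwM
        refine hnt.not_subsingleton ((subsingleton_singleton (a := β)).anti fun m hm => ?_)
        rcases hMsub hm with h | rfl | rfl
        exacts [hβ ▸ h, absurd hm hvM, absurd hm hwM]
      exact Or.inr (Or.inr (Or.inl
        ⟨β, hM.isAttached hXW hβ hwM hw, hM.2 β hβM w hwM v ⟨hvW, hvM⟩⟩))

lemma cases_of_not_isPrimeOn_union_pair (hX : σ.IsPrimeOn X) (hv : v ∉ X) (hw : w ∉ X)
    (hnp : ¬ σ.IsPrimeOn (X ∪ {v, w})) :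
    σ.AlikeOn X v w ∨
      (∃ β, σ.IsAttached X β v ∧ (σ.IsAttached X β w ∨ σ.Alike w β v)) ∨
      (∃ β, σ.IsAttached X β w ∧ σ.Alike v β w) ∨
      (σ.IsInner X v ∧ σ.IsInner X w) ∨ σ.IsInner (insert v X) w ∨ σ.IsInner (insert w X) v := by
  rw [isPrimeOn_iff, not_and] at hnp
  push Not at hnp
  obtain ⟨M, hM, hnt, hWM⟩ := hnp (hX.1.trans (encard_le_encard subset_union_left))
  exact hM.cases_of_union_pair hX hv hw hnt hWM

lemma isPrimeOn_union_pair_of_isAttached (hX : σ.IsPrimeOn X) (hb : σ.IsAttached X α b)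
    (hu : u ∉ X) (hnu : ¬ σ.IsAttached X α u) (hsplit : ¬ σ.Alike u α b) :
    σ.IsPrimeOn (X ∪ {b, u}) := by
  by_contra hnp
  rcases cases_of_not_isPrimeOn_union_pair hX hb.1 hu hnp with
    hE | ⟨β, hβb, hβu | hβ⟩ | ⟨β, hβu, hβ⟩ | ⟨hIb, -⟩ | hIu | hIb
  · exact hnu (hb.of_alikeOn hu hE)
  · exact hnu (hb.eq hX hβb ▸ hβu)
  · exact hsplit (hb.eq hX hβb ▸ hβ)
  · obtain rfl | hβα := eq_or_ne β α
    · exact hnu hβu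
    · exact hsplit (alike_exchange (hβu.2.2 α hb.2.1 hβα.symm).symm hβ.symm
        (hb.2.2 β hβu.2.1 hβα))
  · exact hIb.not_isAttached hX hb
  · exact hsplit (hIu.2 b (mem_insert _ _) α (mem_insert_of_mem _ hb.2.1)).symm
  · exact (hIb.mono (subset_insert _ _)).not_isAttached hX hb

lemma exists_isPrimeOn_union_pair_of_isAttached (hσ : σ.IsPrimeOn univ) (hX : σ.IsPrimeOn X)
    (hv : σ.IsAttached X α v) : ∃ b ∈ Xᶜ, ∃ u ∈ Xᶜ, b ≠ u ∧ σ.IsPrimeOn (X ∪ {b, u}) := by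
  by_contra! hcon
  have hA : σ.IsModuleOn univ (insert α {u | σ.IsAttached X α u}) := by
    refine isModuleOn_of_forall_alike (subset_univ _) α fun u hu b hb => ?_
    have huα : u ≠ α := fun h => hu.2 (Or.inl h)
    obtain rfl | hb := hb
    · exact alike_refl huα
    by_cases huX : u ∈ X
    · exact (hb.2.2 u huX huα).symm
    by_contra hsplit
    have hnu : ¬ σ.IsAttached X α u := fun h => hu.2 (Or.inr h)
    exact hcon b hb.1 u huX (by rintro rfl; exact hnu hb)
      (isPrimeOn_union_pair_of_isAttached hX hb huX hnu fun h => hsplit h.symm)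
  obtain ⟨γ, hγ, hγα, -⟩ := exists_mem_ne_ne_of_three_le_encard hX.1 α α
  have hαv : α ≠ v := fun h => hv.1 (h ▸ hv.2.1)
  rcases hσ.subset_of_isModuleOn hA ⟨α, Or.inl rfl, v, Or.inr hv, hαv⟩ (mem_univ γ) with h | h
  exacts [hγα h, h.1 hγ]

lemma exists_isPrimeOn_union_pair_of_forall_not_isAttached (hσ : σ.IsPrimeOn univ)
    (hX : σ.IsPrimeOn X) (hcard : 2 ≤ Xᶜ.encard) (hA : ∀ α v, ¬ σ.IsAttached X α v) :
    ∃ v ∈ Xᶜ, ∃ w ∈ Xᶜ, v ≠ w ∧ σ.IsPrimeOn (X ∪ {v, w}) := by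
  by_contra! hcon
  have hpair : ∀ v ∉ X, ∀ w ∉ X, v ≠ w → σ.AlikeOn X v w ∨ (σ.IsInner X v ∧ σ.IsInner X w) ∨
      σ.IsInner (insert v X) w ∨ σ.IsInner (insert w X) v := by
    intro v hv w hw hvw
    rcases cases_of_not_isPrimeOn_union_pair hX hv hw (hcon v hv w hw hvw) with
      h | ⟨β, h, -⟩ | ⟨β, h, -⟩ | h
    exacts [Or.inl h, absurd h (hA β v), absurd h (hA β w), Or.inr h]
  obtain ⟨a, ha, b, hb, hab⟩ : X.Nontrivial :=
    one_lt_encard_iff_nontrivial.1 (lt_of_lt_of_le (by norm_num) hX.1)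
  by_cases hI : ∃ z, σ.IsInner X z
  · obtain ⟨z, hz⟩ := hI
    have hM : σ.IsModuleOn univ (X ∪ {v | v ∉ X ∧ ¬ σ.IsInner X v}) := by
      refine isModuleOn_of_forall_alike (subset_univ _) a fun u hu m hm => ?_
      have huI : σ.IsInner X u := by_contra fun h => hu.2 (Or.inr ⟨fun h' => hu.2 (Or.inl h'), h⟩)
      rcases hm with hm | ⟨hmX, hmI⟩
      · exact huI.2 m hm a ha
      have hmu : m ≠ u := by rintro rfl; exact hmI huI
      rcases hpair m hmX u huI.1 hmu with hE | ⟨hIm, -⟩ | hIu | hIm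
      · exact absurd (huI.of_alikeOn hmX hE) hmI
      · exact absurd hIm hmI
      · exact hIu.2 m (mem_insert _ _) a (mem_insert_of_mem _ ha)
      · exact absurd (hIm.mono (subset_insert _ _)) hmI
    rcases hσ.subset_of_isModuleOn hM ⟨a, Or.inl ha, b, Or.inl hb, hab⟩ (mem_univ z) with h | h
    exacts [hz.1 h, h.2 hz]
  · push Not at hI
    obtain ⟨p, hp, q, hq, hpq⟩ : Xᶜ.Nontrivial :=
      one_lt_encard_iff_nontrivial.1 (lt_of_lt_of_le (by norm_num) hcard)
    have hM : σ.IsModuleOn univ Xᶜ := by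
      refine isModuleOn_of_forall_alike (subset_univ _) p fun u hu m hm => ?_
      have huX : u ∈ X := not_not.1 hu.2
      obtain rfl | hmp := eq_or_ne m p
      · exact alike_refl (ne_of_mem_of_not_mem huX hm)
      rcases hpair m hm p hp hmp with hE | ⟨hIm, -⟩ | hIp | hIm
      · exact hE u huX
      · exact absurd hIm (hI m)
      · exact absurd (hIp.mono (subset_insert _ _)) (hI p)
      · exact absurd (hIm.mono (subset_insert _ _)) (hI m)
    exact hσ.subset_of_isModuleOn hM ⟨p, hp, q, hq, hpq⟩ (mem_univ a) ha

end TwoStructure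

theorem statement1_general (σ : TwoStructure V) (X : Set V)
    (hXp : σ.IsPrimeOn X) (hcard : 2 ≤ Xᶜ.encard)
    (hσ : σ.IsPrimeOn Set.univ) :
    ∃ v ∈ Xᶜ, ∃ w ∈ Xᶜ, v ≠ w ∧ σ.IsPrimeOn (X ∪ {v, w}) := by
  by_cases hA : ∃ α v, σ.IsAttached X α v
  · obtain ⟨α, v, hv⟩ := hA
    exact σ.exists_isPrimeOn_union_pair_of_isAttached hσ hXp hv
  · push Not at hA
    exact σ.exists_isPrimeOn_union_pair_of_forall_not_isAttached hσ hXp hcard hA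

/-- The parity theorem: if `σ` is prime and `σ[X]` is prime with `|X̄| ≥ 2`,
then some two-vertex extension of `X` induces a prime substructure. -/
theorem statement1 (σ : TwoStructure V) (X : Set V) (hX : X ⊂ Set.univ)
    (hXp : σ.IsPrimeOn X) (hcard : 2 ≤ Xᶜ.encard)
    (hσ : σ.IsPrimeOn Set.univ) :
    ∃ v ∈ Xᶜ, ∃ w ∈ Xᶜ, v ≠ w ∧ σ.IsPrimeOn (X ∪ {v, w}) :=
  statement1_general σ X hXp hcard hσ
end

section
/- Let σ be a prime 2-structure and let X ⊊ V(σ) be such that σ[X] is prime. For each x ∈ X̄, there exists a finite subset F of X̄ with x ∈ F such that σ[X∪F] is prime. -/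
/-!
Formalization of 2-structures (Ehrenfeucht et al.), modules, primality,
criticality, the outside partition/graph, and (discrete) half graphs.
-/

universe u

variable {V : Type u}

/-!
Let `σ[Y]` be prime and `x ∉ Y`. Either `σ[Y ∪ {x}]` is prime, or `Y` is a module of it
(`x ∈ ⟨Y⟩`), or `{α, x}` is one for a unique `α ∈ Y` (`x ∈ Y(α)`).

If `x ∈ Y(α)`, follow walks `x = y₀, y₁, …` in which each `yᵢ₊₁` distinguishes `α` from
`yᵢ ∈ Y(α)`. They cannot all stay inside `Y(α)`: together with `α` the vertices reached would
form a nontrivial module of the prime `σ`. For a walk whose last vertex `yₙ` leaves `Y(α)`,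
`σ[Y ∪ {yₙ₋₁, yₙ}]` is prime; unless `yₙ` already distinguishes `α` from `x` (and then
`σ[Y ∪ {x, yₙ}]` is prime), over this larger base `x` is an extension vertex or still
attached to `α`. In the latter case the same walk, cut at the first vertex that leaves the
new class, is shorter than `n`, and induction on the length of the walk concludes.

If `x ∈ ⟨Y⟩` the argument is the same, with walks through `⟨Y⟩` in which each vertex
distinguishes a vertex of `Y` from the next one; should `x` become attached over the larger
base, the first case applies.
-/

inductive ReachIn (r : V → V → Prop) (x : V) : V → ℕ → Prop
  | refl : ReachIn r x x 0
  | tail {y z : V} {n : ℕ} : ReachIn r x y n → r y z → ReachIn r x z (n + 1)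

theorem ReachIn.truncate {r r' : V → V → Prop} {P : V → Prop} {x w : V} {n : ℕ}
    (hw : ReachIn r x w n) (h : ∀ y z, P y → r y z → r' y z) :
    ∃ k ≤ n, ∃ w', ReachIn r' x w' k ∧ (¬ P w' ∨ w' = w) := by
  induction hw with
  | refl => exact ⟨0, le_rfl, x, .refl, .inr rfl⟩
  | @tail y z n _ hyz ih =>
    obtain ⟨k, hk, w', hw', hw'P | rfl⟩ := ih
    · exact ⟨k, hk.trans n.le_succ, w', hw', .inl hw'P⟩
    by_cases hP : P w'
    · exact ⟨k + 1, Nat.succ_le_succ hk, z, hw'.tail (h _ _ hP hyz), .inr rfl⟩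
    · exact ⟨k, hk.trans n.le_succ, w', hw', .inl hP⟩

namespace TwoStructure

variable (σ : TwoStructure V)

def Indist (v p q : V) : Prop := σ.rel (p, v) (q, v) ∧ σ.rel (v, p) (v, q)

def Distinguishes (v p q : V) : Prop := v ≠ p ∧ v ≠ q ∧ ¬ σ.Indist v p q

def AttStep (Y : Set V) (α y z : V) : Prop := y ∈ σ.attSet Y α ∧ σ.Distinguishes z α y

def InnStep (Y : Set V) (y z : V) : Prop := y ∈ σ.innSet Y ∧ ∃ a ∈ Y, σ.Distinguishes y a z

def HasFinitePrimeExt (Y : Set V) (x : V) : Prop :=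
  ∃ F : Set V, F ⊆ Yᶜ ∧ F.Finite ∧ x ∈ F ∧ σ.IsPrimeOn (Y ∪ F)

variable {σ} {W Y M : Set V} {v p q x y z α β : V}

theorem indist_refl (h : v ≠ p) : σ.Indist v p p :=
  ⟨σ.refl _ (Ne.symm h), σ.refl _ h⟩

theorem Indist.symm (h : σ.Indist v p q) : σ.Indist v q p :=
  ⟨σ.symm h.1, σ.symm h.2⟩

theorem Indist.trans {r : V} (h : σ.Indist v p q) (h' : σ.Indist v q r) : σ.Indist v p r :=
  ⟨σ.trans h.1 h'.1, σ.trans h.2 h'.2⟩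

theorem Indist.transfer {a b : V} (hx : σ.Indist x a b) (ha : σ.Indist a x y)
    (hb : σ.Indist b x y) : σ.Indist y a b :=
  ⟨σ.trans (σ.symm ha.2) (σ.trans hx.1 hb.2), σ.trans (σ.symm ha.1) (σ.trans hx.2 hb.1)⟩

theorem indist_of_not_distinguishes (h : ¬ σ.Distinguishes v p q) (hp : v ≠ p) (hq : v ≠ q) :
    σ.Indist v p q :=
  not_not.mp fun hn => h ⟨hp, hq, hn⟩

theorem IsModuleOn.indist (hM : σ.IsModuleOn W M) (hp : p ∈ M) (hq : q ∈ M) (hv : v ∈ W)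
    (hvM : v ∉ M) : σ.Indist v p q :=
  hM.2 p hp q hq v ⟨hv, hvM⟩

theorem IsModuleOn.restrict {U : Set V} (hM : σ.IsModuleOn W M) (hU : U ⊆ W) :
    σ.IsModuleOn U (M ∩ U) :=
  ⟨Set.inter_subset_right, fun _ hp _ hq _ hv =>
    hM.indist hp.1 hq.1 (hU hv.1) fun hvM => hv.2 ⟨hvM, hv.1⟩⟩

theorem isModuleOn_of_indist {c : V} (hMW : M ⊆ W)
    (h : ∀ v ∈ W, v ∉ M → ∀ p ∈ M, σ.Indist v c p) : σ.IsModuleOn W M :=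
  ⟨hMW, fun p hp q hq v hv => ((h v hv.1 hv.2 p hp).symm).trans (h v hv.1 hv.2 q hq)⟩

theorem IsPrimeOn.not_isModuleOn (hW : σ.IsPrimeOn W) (hp : p ∈ M) (hq : q ∈ M) (hpq : p ≠ q)
    (hv : v ∈ W) (hvM : v ∉ M) : ¬ σ.IsModuleOn W M := by
  intro hM
  rcases hW.2 M hM with rfl | rfl | ⟨u, rfl⟩
  · exact hp
  · exact hvM hv
  · exact hpq (hp.trans hq.symm)

theorem IsPrimeOn.three_le_encard_of_subset (hY : σ.IsPrimeOn Y) (hYW : Y ⊆ W) :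
    3 ≤ W.encard :=
  hY.1.trans (Set.encard_mono hYW)

theorem IsPrimeOn.exists_ne_ne (hY : σ.IsPrimeOn Y) (a b : V) : ∃ v ∈ Y, v ≠ a ∧ v ≠ b := by
  by_contra! h
  have hsub : Y ⊆ {a, b} := fun v hv => (em (v = a)).imp id (h v hv)
  have := hY.1.trans ((Set.encard_mono hsub).trans (Set.encard_insert_le _ _))
  norm_num at this

theorem IsPrimeOn.inter_eq_of_isModuleOn (hY : σ.IsPrimeOn Y) (hYW : Y ⊆ W)
    (hM : σ.IsModuleOn W M) : M ∩ Y = ∅ ∨ M ∩ Y = Y ∨ ∃ u ∈ Y, M ∩ Y = {u} := by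
  rcases hY.2 _ (hM.restrict hYW) with h | h | ⟨u, h⟩
  · exact .inl h
  · exact .inr (.inl h)
  · exact .inr (.inr ⟨u, (h.symm ▸ rfl : u ∈ M ∩ Y).2, h⟩)

theorem mem_innSet_iff : x ∈ σ.innSet Y ↔ x ∉ Y ∧ ∀ a ∈ Y, ∀ b ∈ Y, σ.Indist x a b := by
  refine ⟨fun h => ⟨h.1, fun a ha b hb => h.2.indist ha hb (.inr rfl) h.1⟩,
    fun h => ⟨h.1, Set.subset_union_left, fun a ha b hb v hv => ?_⟩⟩
  obtain rfl : v = x := hv.1.resolve_left hv.2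
  exact h.2 a ha b hb

theorem mem_attSet_iff (hα : α ∈ Y) :
    x ∈ σ.attSet Y α ↔ x ∉ Y ∧ ∀ β ∈ Y, β ≠ α → σ.Indist β α x := by
  refine ⟨fun h => ⟨h.1, fun β hβ hβα => h.2.indist (.inl rfl) (.inr rfl) (.inl hβ) ?_⟩,
    fun h => ⟨h.1, isModuleOn_of_indist (c := α) ?_ fun v hv hvM p hp => ?_⟩⟩
  · rintro (rfl | rfl)
    exacts [hβα rfl, h.1 hβ]
  · rintro p (rfl | rfl)
    exacts [.inl hα, .inr rfl]
  · have hvY : v ∈ Y := hv.resolve_right fun hvx => hvM (.inr hvx)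
    have hvα : v ≠ α := fun hvα => hvM (.inl hvα)
    rcases hp with rfl | rfl
    exacts [indist_refl hvα, h.2 v hvY hvα]

theorem mem_innSet_of_isModuleOn (hM : σ.IsModuleOn W M) (hYM : Y ⊆ M) (hxW : x ∈ W)
    (hxM : x ∉ M) : x ∈ σ.innSet Y :=
  mem_innSet_iff.mpr ⟨fun h => hxM (hYM h), fun _ ha _ hb => hM.indist (hYM ha) (hYM hb) hxW hxM⟩

theorem mem_attSet_of_isModuleOn (hα : α ∈ Y) (hYW : Y ⊆ W) (hM : σ.IsModuleOn W M)
    (hαM : α ∈ M) (hxM : x ∈ M) (hx : x ∉ Y) (hMY : ∀ β ∈ Y, β ∈ M → β = α) :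
    x ∈ σ.attSet Y α :=
  (mem_attSet_iff hα).mpr ⟨hx, fun β hβ hβα =>
    hM.indist hαM hxM (hYW hβ) fun hβM => hβα (hMY β hβ hβM)⟩

theorem disjoint_innSet_attSet (hY : σ.IsPrimeOn Y) (hα : α ∈ Y) :
    Disjoint (σ.innSet Y) (σ.attSet Y α) := by
  refine Set.disjoint_left.mpr fun x hI hA => ?_
  obtain ⟨β, hβ, hβα, -⟩ := hY.exists_ne_ne α α
  obtain ⟨γ, hγ, hγα, hγβ⟩ := hY.exists_ne_ne α β
  have hI := (mem_innSet_iff.mp hI).2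
  have hA := ((mem_attSet_iff hα).mp hA).2
  refine hY.not_isModuleOn (M := Y \ {α}) ⟨hβ, hβα⟩ ⟨hγ, hγα⟩ hγβ.symm hα (fun h => h.2 rfl)
    (isModuleOn_of_indist (c := β) Set.sdiff_subset fun v hv hvM p hp => ?_)
  obtain rfl : v = α := by_contra fun h => hvM ⟨hv, h⟩
  exact (hI β hβ p hp.1).transfer (hA β hβ hβα).symm (hA p hp.1 hp.2).symm

theorem eq_of_mem_attSet (hY : σ.IsPrimeOn Y) (hα : α ∈ Y) (hβ : β ∈ Y)
    (hxα : x ∈ σ.attSet Y α) (hxβ : x ∈ σ.attSet Y β) : α = β := by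
  by_contra hαβ
  obtain ⟨v, hv, hvα, hvβ⟩ := hY.exists_ne_ne α β
  refine hY.not_isModuleOn (M := {α, β}) (.inl rfl) (.inr rfl) hαβ hv
    (by rintro (h | h) <;> contradiction)
    (isModuleOn_of_indist (c := α) ?_ fun w hw hwM p hp => ?_)
  · rintro p (rfl | rfl) <;> assumption
  · have hwα : w ≠ α := fun h => hwM (.inl h)
    rcases hp with rfl | rfl
    · exact indist_refl hwα
    · exact (((mem_attSet_iff hα).mp hxα).2 w hw hwα).trans
        (((mem_attSet_iff hβ).mp hxβ).2 w hw fun h => hwM (.inr h)).symm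

theorem mem_extSet_or_innSet_or_attSet (hY : σ.IsPrimeOn Y) (hx : x ∉ Y) :
    x ∈ σ.extSet Y ∨ x ∈ σ.innSet Y ∨ ∃ α ∈ Y, x ∈ σ.attSet Y α := by
  by_contra! h
  refine h.1 ⟨hx, hY.three_le_encard_of_subset Set.subset_union_left, fun M hM => ?_⟩
  have hMeq : M = M ∩ Y ∪ M \ Y := (Set.inter_union_sdiff M Y).symm
  have hMx : M \ Y ⊆ {x} := fun p hp => (hM.1 hp.1).resolve_left hp.2
  rcases hY.inter_eq_of_isModuleOn Set.subset_union_left hM with hA | hA | ⟨u, hu, hA⟩ <;>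
    rcases Set.subset_singleton_iff_eq.mp hMx with hB | hB <;>
    rw [hMeq, hA, hB] at hM ⊢
  · simp
  · simp
  · rw [Set.union_empty] at hM; exact absurd ⟨hx, hM⟩ h.2.1
  · simp
  · simp
  · exact absurd ⟨hx, hM⟩ (h.2.2 u hu)

theorem isPrimeOn_union_pair (hY : σ.IsPrimeOn Y)
    (hxy : ¬ σ.IsModuleOn (Y ∪ {x, y}) {x, y})
    (hY₀ : ¬ σ.IsModuleOn (Y ∪ {x, y}) Y)
    (hYx : ¬ σ.IsModuleOn (Y ∪ {x, y}) (Y ∪ {x}))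
    (hYy : ¬ σ.IsModuleOn (Y ∪ {x, y}) (Y ∪ {y}))
    (hux : ∀ u ∈ Y, ¬ σ.IsModuleOn (Y ∪ {x, y}) {u, x})
    (huy : ∀ u ∈ Y, ¬ σ.IsModuleOn (Y ∪ {x, y}) {u, y})
    (huxy : ∀ u ∈ Y, ¬ σ.IsModuleOn (Y ∪ {x, y}) {u, x, y}) :
    σ.IsPrimeOn (Y ∪ {x, y}) := by
  refine ⟨hY.three_le_encard_of_subset Set.subset_union_left, fun M hM => ?_⟩
  have hMeq : M = M ∩ Y ∪ M \ Y := (Set.inter_union_sdiff M Y).symm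
  have hMxy : M \ Y ⊆ {x, y} := fun p hp => (hM.1 hp.1).resolve_left hp.2
  -- of the twelve combinations of `M ∩ Y` and `M \ Y`, the nontrivial ones are the seven excluded
  rcases hY.inter_eq_of_isModuleOn Set.subset_union_left hM with hA | hA | ⟨u, hu, hA⟩ <;>
    rcases Set.subset_pair_iff_eq.mp hMxy with hB | hB | hB | hB <;>
    rw [hMeq, hA, hB] at hM ⊢
  · simp
  · simp
  · simp
  · rw [Set.empty_union] at hM; exact absurd hM hxy
  · rw [Set.union_empty] at hM; exact absurd hM hY₀
  · exact absurd hM hYx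
  · exact absurd hM hYy
  · simp
  · simp
  · exact absurd hM (hux u hu)
  · exact absurd hM (huy u hu)
  · exact absurd hM (huxy u hu)

theorem isPrimeOn_union_pair_of_mem_attSet (hY : σ.IsPrimeOn Y) (hα : α ∈ Y)
    (hx : x ∈ σ.attSet Y α) (hy : y ∉ Y) (hyA : y ∉ σ.attSet Y α)
    (hd : σ.Distinguishes y α x) : σ.IsPrimeOn (Y ∪ {x, y}) := by
  have hxY : x ∉ Y := hx.1
  have hxA := ((mem_attSet_iff hα).mp hx).2
  have hYW : Y ⊆ Y ∪ {x, y} := Set.subset_union_left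
  have hxW : x ∈ Y ∪ {x, y} := .inr (.inl rfl)
  have hyW : y ∈ Y ∪ {x, y} := .inr (.inr rfl)
  have hxI : x ∉ σ.innSet Y := fun h => Set.disjoint_left.mp (disjoint_innSet_attSet hY hα) h hx
  have hYu : ∀ {u β}, β ∈ Y → β ∈ ({u, x, y} : Set V) → β = u := by
    rintro u β hβ (h | rfl | rfl)
    exacts [h, (hxY hβ).elim, (hy hβ).elim]
  refine isPrimeOn_union_pair hY (fun hM => ?_) (fun hM => ?_) (fun hM => ?_) (fun hM => ?_)
    (fun u hu hM => ?_) (fun u hu hM => ?_) (fun u hu hM => ?_)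
  · refine hyA ((mem_attSet_iff hα).mpr ⟨hy, fun β hβ hβα =>
      (hxA β hβ hβα).trans (hM.indist (.inl rfl) (.inr rfl) (hYW hβ) ?_)⟩)
    rintro (rfl | rfl)
    exacts [hxY hβ, hy hβ]
  · exact hxI (mem_innSet_of_isModuleOn hM subset_rfl hxW hxY)
  · refine hd.2.2 (hM.indist (.inl hα) (.inr rfl) hyW ?_)
    rintro (h | h)
    exacts [hy h, hd.2.1 h]
  · refine hxI (mem_innSet_of_isModuleOn hM Set.subset_union_left hxW ?_)
    rintro (h | h)
    exacts [hxY h, hd.2.1 h.symm]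
  · obtain rfl := eq_of_mem_attSet hY hu hα (mem_attSet_of_isModuleOn hu hYW hM (.inl rfl)
      (.inr rfl) hxY fun β hβ h => h.resolve_right (ne_of_mem_of_not_mem hβ hxY)) hx
    refine hd.2.2 (hM.indist (.inl rfl) (.inr rfl) hyW ?_)
    rintro (rfl | h)
    exacts [hy hu, hd.2.1 h]
  · by_cases huα : u = α
    · subst huα
      exact hyA (mem_attSet_of_isModuleOn hα hYW hM (.inl rfl) (.inr rfl) hy
        fun β hβ h => h.resolve_right (ne_of_mem_of_not_mem hβ hy))
    · refine hd.2.2 ((hxA u hu huα).transfer (hM.indist (.inl rfl) (.inr rfl) (hYW hα) ?_)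
        (hM.indist (.inl rfl) (.inr rfl) hxW ?_))
      · rintro (h | rfl)
        exacts [huα h.symm, hy hα]
      · rintro (rfl | h)
        exacts [hxY hu, hd.2.1 h.symm]
  · obtain rfl := eq_of_mem_attSet hY hu hα (mem_attSet_of_isModuleOn hu hYW hM (.inl rfl)
      (.inr (.inl rfl)) hxY fun β hβ h => hYu hβ h) hx
    exact hyA (mem_attSet_of_isModuleOn hu hYW hM (.inl rfl) (.inr (.inr rfl)) hy
      fun β hβ h => hYu hβ h)

theorem isPrimeOn_union_pair_of_mem_innSet {c : V} (hY : σ.IsPrimeOn Y) (hx : x ∈ σ.innSet Y)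
    (hy : y ∉ Y) (hyI : y ∉ σ.innSet Y) (hc : c ∈ Y) (hd : σ.Distinguishes x c y) :
    σ.IsPrimeOn (Y ∪ {x, y}) := by
  obtain ⟨a, ha, b, hb, hab⟩ : ∃ a ∈ Y, ∃ b ∈ Y, ¬ σ.Indist y a b := by
    by_contra! h
    exact hyI (mem_innSet_iff.mpr ⟨hy, h⟩)
  have hxY : x ∉ Y := hx.1
  have hxI := (mem_innSet_iff.mp hx).2
  have hxA : ∀ u ∈ Y, x ∉ σ.attSet Y u := fun u hu h =>
    Set.disjoint_left.mp (disjoint_innSet_attSet hY hu) hx h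
  have hYW : Y ⊆ Y ∪ {x, y} := Set.subset_union_left
  have hxW : x ∈ Y ∪ {x, y} := .inr (.inl rfl)
  have hyW : y ∈ Y ∪ {x, y} := .inr (.inr rfl)
  have hYxy : ∀ {β}, β ∈ Y → β ∉ ({x, y} : Set V) := by
    rintro β hβ (rfl | rfl)
    exacts [hxY hβ, hy hβ]
  refine isPrimeOn_union_pair hY (fun hM => ?_) (fun hM => ?_) (fun hM => ?_) (fun hM => ?_)
    (fun u hu hM => ?_) (fun u hu hM => ?_) (fun u hu hM => ?_)
  · exact hab ((hxI a ha b hb).transfer (hM.indist (.inl rfl) (.inr rfl) (hYW ha) (hYxy ha))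
      (hM.indist (.inl rfl) (.inr rfl) (hYW hb) (hYxy hb)))
  · exact hab (hM.indist ha hb hyW hy)
  · refine hab (hM.indist (.inl ha) (.inl hb) hyW ?_)
    rintro (h | h)
    exacts [hy h, hd.2.1 h.symm]
  · refine hd.2.2 (hM.indist (.inl hc) (.inr rfl) hxW ?_)
    rintro (h | h)
    exacts [hxY h, hd.2.1 h]
  · exact hxA u hu (mem_attSet_of_isModuleOn hu hYW hM (.inl rfl) (.inr rfl) hxY
      fun β hβ h => h.resolve_right (ne_of_mem_of_not_mem hβ hxY))
  · refine hd.2.2 ((hxI c hc u hu).trans (hM.indist (.inl rfl) (.inr rfl) hxW ?_))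
    rintro (rfl | h)
    exacts [hxY hu, hd.2.1 h]
  · refine hxA u hu (mem_attSet_of_isModuleOn hu hYW hM (.inl rfl) (.inr (.inl rfl)) hxY ?_)
    rintro β hβ (h | h)
    exacts [h, (hYxy hβ h).elim]

theorem HasFinitePrimeExt.of_union {G : Set V} (hG : G ⊆ Yᶜ) (hGf : G.Finite)
    (h : σ.HasFinitePrimeExt (Y ∪ G) x) : σ.HasFinitePrimeExt Y x := by
  obtain ⟨F, hF, hFf, hxF, hp⟩ := h
  refine ⟨F ∪ G, Set.union_subset (fun p hp hpY => hF hp (.inl hpY)) hG, hFf.union hGf,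
    .inl hxF, ?_⟩
  rwa [Set.union_comm F G, ← Set.union_assoc]

theorem hasFinitePrimeExt_of_mem_extSet (hx : x ∈ σ.extSet Y) : σ.HasFinitePrimeExt Y x :=
  ⟨{x}, Set.singleton_subset_iff.mpr hx.1, Set.finite_singleton x, rfl, hx.2⟩

theorem exists_reachIn_attStep_not_mem (hσ : σ.IsPrimeOn Set.univ) (hY : σ.IsPrimeOn Y)
    (hα : α ∈ Y) (hx : x ∈ σ.attSet Y α) :
    ∃ w n, ReachIn (σ.AttStep Y α) x w n ∧ w ∉ σ.attSet Y α := by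
  by_contra! hall
  obtain ⟨β, hβ, hβα, -⟩ := hY.exists_ne_ne α α
  refine hσ.not_isModuleOn (M := insert α {w | ∃ n, ReachIn (σ.AttStep Y α) x w n})
    (.inl rfl) (.inr ⟨0, .refl⟩) (fun h => hx.1 (h ▸ hα)) (Set.mem_univ β) ?_
    (isModuleOn_of_indist (c := α) (Set.subset_univ _) fun v _ hvA p hp => ?_)
  · rintro (h | ⟨n, hn⟩)
    exacts [hβα h, (hall β n hn).1 hβ]
  · have hvα : v ≠ α := fun h => hvA (.inl h)
    rcases hp with rfl | ⟨n, hn⟩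
    · exact indist_refl hvα
    · exact indist_of_not_distinguishes (fun hd => hvA (.inr ⟨n + 1, hn.tail ⟨hall p n hn, hd⟩⟩))
        hvα fun h => hvA (.inr ⟨n, h ▸ hn⟩)

theorem exists_reachIn_innStep_not_mem (hσ : σ.IsPrimeOn Set.univ) (hY : σ.IsPrimeOn Y)
    (x : V) : ∃ w n, ReachIn (σ.InnStep Y) x w n ∧ w ∉ σ.innSet Y := by
  by_contra! hall
  obtain ⟨a, ha, -⟩ := hY.exists_ne_ne x x
  obtain ⟨b, hb, hba, -⟩ := hY.exists_ne_ne a a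
  have hY_out : ∀ w n, ReachIn (σ.InnStep Y) x w n → w ∉ Y := fun w n hw => (hall w n hw).1
  refine hσ.not_isModuleOn (M := {w | ∃ n, ReachIn (σ.InnStep Y) x w n}ᶜ)
    (fun ⟨n, hn⟩ => hY_out a n hn ha) (fun ⟨n, hn⟩ => hY_out b n hn hb) hba.symm
    (Set.mem_univ x) (not_not.mpr ⟨0, .refl⟩)
    (isModuleOn_of_indist (c := a) (Set.subset_univ _) fun v _ hvC p hp => ?_)
  obtain ⟨n, hn⟩ := not_not.mp hvC
  exact indist_of_not_distinguishes (fun hd => hp ⟨n + 1, hn.tail ⟨hall v n hn, a, ha, hd⟩⟩)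
    (fun h => hY_out v n hn (h ▸ ha)) fun h => hp ⟨n, h ▸ hn⟩

theorem mem_extSet_or_attSet_union_pair (hY : σ.IsPrimeOn Y) (hα : α ∈ Y)
    (hx : x ∈ σ.attSet Y α) (hz : z ∉ Y) (hzA : z ∉ σ.attSet Y α) (hzy : σ.Distinguishes z α y)
    (hzx : ¬ σ.Distinguishes z α x) (hY' : σ.IsPrimeOn (Y ∪ {y, z})) (hxY' : x ∉ Y ∪ {y, z}) :
    x ∈ σ.extSet (Y ∪ {y, z}) ∨ x ∈ σ.attSet (Y ∪ {y, z}) α := by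
  have hYW : Y ⊆ Y ∪ {y, z} ∪ {x} := fun β hβ => .inl (.inl hβ)
  have hzxα : σ.Indist z α x := indist_of_not_distinguishes hzx hzy.1 fun h => hzA (h ▸ hx)
  rcases mem_extSet_or_innSet_or_attSet hY' hxY' with hE | hI | ⟨γ, hγ, hA⟩
  · exact .inl hE
  · exact absurd (mem_innSet_of_isModuleOn hI.2 (fun β hβ => .inl hβ) (.inr rfl) hI.1)
      (Set.disjoint_right.mp (disjoint_innSet_attSet hY hα) hx)
  rcases hγ with hγ | rfl | rfl
  · obtain rfl := eq_of_mem_attSet hY hγ hα (mem_attSet_of_isModuleOn hγ hYW hA.2 (.inl rfl)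
      (.inr rfl) hx.1 fun β hβ h => h.resolve_right (ne_of_mem_of_not_mem hβ hx.1)) hx
    exact .inr hA
  · refine absurd (hzxα.trans (hA.2.indist (.inr rfl) (.inl rfl) (.inl (.inr (.inr rfl))) ?_))
      hzy.2.2
    rintro (h | h)
    exacts [hzy.2.1 h, hzA (h ▸ hx)]
  · refine absurd ((mem_attSet_iff hα).mpr ⟨hz, fun β hβ hβα => (((mem_attSet_iff hα).mp hx).2 β
      hβ hβα).trans (hA.2.indist (.inr rfl) (.inl rfl) (hYW hβ) ?_)⟩) hzA
    rintro (rfl | rfl)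
    exacts [hz hβ, hx.1 hβ]

theorem hasFinitePrimeExt_of_reachIn_attStep {n : ℕ} (hY : σ.IsPrimeOn Y) (hα : α ∈ Y)
    (hx : x ∈ σ.attSet Y α) (hwalk : ReachIn (σ.AttStep Y α) x z n) (hzA : z ∉ σ.attSet Y α) :
    σ.HasFinitePrimeExt Y x := by
  induction n using Nat.strong_induction_on generalizing Y x z with
  | _ n ih =>
  cases hwalk with
  | refl => exact absurd hx hzA
  | @tail y _ m hy hstep =>
  obtain ⟨hyA, hzy⟩ := hstep
  have hzY : z ∉ Y := fun hz => hzy.2.2 (((mem_attSet_iff hα).mp hyA).2 z hz hzy.1)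
  by_cases hzx : σ.Distinguishes z α x
  · exact ⟨{x, z}, Set.pair_subset hx.1 hzY, Set.toFinite _, .inl rfl,
      isPrimeOn_union_pair_of_mem_attSet hY hα hx hzY hzA hzx⟩
  have hY' := isPrimeOn_union_pair_of_mem_attSet hY hα hyA hzY hzA hzy
  have hxY' : x ∉ Y ∪ {y, z} := by
    rintro (h | rfl | rfl)
    exacts [hx.1 h, hzx hzy, hzA hx]
  refine HasFinitePrimeExt.of_union (Set.pair_subset hyA.1 hzY) (Set.toFinite _) ?_
  rcases mem_extSet_or_attSet_union_pair hY hα hx hzY hzA hzy hzx hY' hxY' with hE | hA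
  · exact hasFinitePrimeExt_of_mem_extSet hE
  have hyA' : y ∉ σ.attSet (Y ∪ {y, z}) α := fun h => h.1 (.inr (.inl rfl))
  obtain ⟨k, hk, w, hw, hwA⟩ := hy.truncate (P := (· ∈ σ.attSet (Y ∪ {y, z}) α))
    (r' := σ.AttStep (Y ∪ {y, z}) α) fun _ _ hP hr => ⟨hP, hr.2⟩
  exact ih k (Nat.lt_succ_of_le hk) hY' (.inl hα) hA hw (hwA.elim id (· ▸ hyA'))

theorem hasFinitePrimeExt_of_mem_attSet (hσ : σ.IsPrimeOn Set.univ) (hY : σ.IsPrimeOn Y)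
    (hα : α ∈ Y) (hx : x ∈ σ.attSet Y α) : σ.HasFinitePrimeExt Y x :=
  let ⟨_, _, hw, hzA⟩ := exists_reachIn_attStep_not_mem hσ hY hα hx
  hasFinitePrimeExt_of_reachIn_attStep hY hα hx hw hzA

theorem hasFinitePrimeExt_of_reachIn_innStep {n : ℕ} (hσ : σ.IsPrimeOn Set.univ)
    (hY : σ.IsPrimeOn Y) (hx : x ∈ σ.innSet Y) (hwalk : ReachIn (σ.InnStep Y) x z n)
    (hzI : z ∉ σ.innSet Y) : σ.HasFinitePrimeExt Y x := by
  induction n using Nat.strong_induction_on generalizing Y x z with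
  | _ n ih =>
  cases hwalk with
  | refl => exact absurd hx hzI
  | @tail y _ m hy hstep =>
  obtain ⟨hyI, a, ha, hyz⟩ := hstep
  have hzY : z ∉ Y := fun hz => hyz.2.2 ((mem_innSet_iff.mp hyI).2 a ha z hz)
  have hY' := isPrimeOn_union_pair_of_mem_innSet hY hyI hzY hzI ha hyz
  rcases eq_or_ne x y with rfl | hxy
  · exact ⟨{x, z}, Set.pair_subset hx.1 hzY, Set.toFinite _, .inl rfl, hY'⟩
  have hxY' : x ∉ Y ∪ {y, z} := by
    rintro (h | h | rfl)
    exacts [hx.1 h, hxy h, hzI hx]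
  refine HasFinitePrimeExt.of_union (Set.pair_subset hyI.1 hzY) (Set.toFinite _) ?_
  rcases mem_extSet_or_innSet_or_attSet hY' hxY' with hE | hI | ⟨γ, hγ, hA⟩
  · exact hasFinitePrimeExt_of_mem_extSet hE
  · have hyI' : y ∉ σ.innSet (Y ∪ {y, z}) := fun h => h.1 (.inr (.inl rfl))
    obtain ⟨k, hk, w, hw, hwI⟩ := hy.truncate (P := (· ∈ σ.innSet (Y ∪ {y, z})))
      (r' := σ.InnStep (Y ∪ {y, z})) fun _ _ hP hr => ⟨hP, hr.2.imp fun _ h => ⟨.inl h.1, h.2⟩⟩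
    exact ih k (Nat.lt_succ_of_le hk) hY' hI hw (hwI.elim id (· ▸ hyI'))
  · exact hasFinitePrimeExt_of_mem_attSet hσ hY' hγ hA

theorem hasFinitePrimeExt_of_mem_innSet (hσ : σ.IsPrimeOn Set.univ) (hY : σ.IsPrimeOn Y)
    (hx : x ∈ σ.innSet Y) : σ.HasFinitePrimeExt Y x :=
  let ⟨_, _, hw, hzI⟩ := exists_reachIn_innStep_not_mem hσ hY x
  hasFinitePrimeExt_of_reachIn_innStep hσ hY hx hw hzI

end TwoStructure

theorem statement3_general (σ : TwoStructure V) (X : Set V)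
    (hσ : σ.IsPrimeOn Set.univ) (hXp : σ.IsPrimeOn X) :
    ∀ x ∈ Xᶜ, ∃ F : Set V, F ⊆ Xᶜ ∧ F.Finite ∧ x ∈ F ∧
      σ.IsPrimeOn (X ∪ F) := by
  intro x hx
  rcases σ.mem_extSet_or_innSet_or_attSet hXp hx with hE | hI | ⟨α, hα, hA⟩
  · exact TwoStructure.hasFinitePrimeExt_of_mem_extSet hE
  · exact TwoStructure.hasFinitePrimeExt_of_mem_innSet hσ hXp hI
  · exact TwoStructure.hasFinitePrimeExt_of_mem_attSet hσ hXp hα hA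

/-- Every vertex outside a prime substructure belongs to a finite prime
extension. -/
theorem statement3 (σ : TwoStructure V) (X : Set V) (hX : X ⊂ Set.univ)
    (hσ : σ.IsPrimeOn Set.univ) (hXp : σ.IsPrimeOn X) :
    ∀ x ∈ Xᶜ, ∃ F : Set V, F ⊆ Xᶜ ∧ F.Finite ∧ x ∈ F ∧
      σ.IsPrimeOn (X ∪ F) :=
  statement3_general σ X hσ hXp
end

section
/- Let σ be a 2-structure and let X ⊊ V(σ) be such that σ[X] is prime. Suppose Statement (S5) holds, i.e. no 5-element subset Y of X̄ satisfies σ[X∪Y] prime. Then no connected component C of the outside graph Γ_{(σ,X̄)} contains an induced subgraph isomorphic to the path P5 on 5 vertices. -/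
/-!
Formalization of 2-structures (Ehrenfeucht et al.), modules, primality,
criticality, the outside partition/graph, and (discrete) half graphs.
-/

universe u

variable {V : Type u}

/-!
An induced `P₅` on `Y` in the outside graph makes `σ[X ∪ Y]` prime, contradicting (S5). In fact
`σ[X ∪ Y]` is prime as soon as the outside graph induces a prime graph on `Y`. A module `M` of
`σ[X ∪ Y]` meets `X` in a trivial module of `σ[X]`. If `M ∩ X = ∅`, any two vertices of `M` are
interchangeable over `X ∪ {w}` for `w ∉ M`, so `M` is a module of the outside graph on `Y`, hence
trivial. Otherwise every vertex `v ∈ Y` lies on an edge `v w`, and `M` restricts to a trivial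
module of the prime `σ[X ∪ {v, w}]`: this forces `v ∈ M` when `X ⊆ M`, and `v ∉ M` when
`M ∩ X` is a single vertex.
-/

open SimpleGraph

lemma GraphIsPrimeOn.exists_adj {G : SimpleGraph V} {Y : Set V} (hY : GraphIsPrimeOn G Y)
    {v : V} (hv : v ∈ Y) : ∃ w ∈ Y, G.Adj v w := by
  by_contra! hiso
  have hmod : GraphIsModuleOn G Y (Y \ {v}) := by
    refine ⟨Set.sdiff_subset, fun u hu => Or.inr fun x hx => ?_⟩
    obtain rfl : u = v := by simpa [hu.1] using hu.2
    exact hiso x hx.1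
  have hcard := Set.encard_sdiff_singleton_add_one hv
  have h3 := hY.1
  rcases hY.2 _ hmod with h | h | ⟨u, h⟩
  · rw [h, Set.encard_empty] at hcard
    rw [← hcard] at h3
    norm_num at h3
  · exact (h.symm ▸ hv : v ∈ Y \ {v}).2 rfl
  · rw [h, Set.encard_singleton] at hcard
    rw [← hcard] at h3
    norm_num at h3

lemma GraphIsPrimeOn.range {W : Type*} {H : SimpleGraph W} {G : SimpleGraph V} (f : H ↪g G)
    (hH : GraphIsPrimeOn H Set.univ) : GraphIsPrimeOn G (Set.range f) := by
  refine ⟨by rw [← Set.image_univ, f.injective.injOn.encard_image]; exact hH.1, fun M hM => ?_⟩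
  have hpre : GraphIsModuleOn H Set.univ (f ⁻¹' M) := by
    refine ⟨Set.subset_univ _, fun v hv => ?_⟩
    exact (hM.2 (f v) ⟨⟨v, rfl⟩, hv.2⟩).imp (fun h x hx => f.map_adj_iff.1 (h _ hx))
      (fun h x hx hadj => h _ hx (f.map_adj_iff.2 hadj))
  rw [← Set.image_preimage_eq_of_subset hM.1]
  rcases hH.2 _ hpre with h | h | ⟨v, h⟩ <;> rw [h]
  · exact Or.inl (Set.image_empty _)
  · exact Or.inr (Or.inl Set.image_univ)
  · exact Or.inr (Or.inr ⟨f v, Set.image_singleton⟩)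

lemma graphIsPrimeOn_pathGraph_five : GraphIsPrimeOn (pathGraph 5) Set.univ := by
  refine ⟨by norm_num [Set.encard_univ], fun M hM => ?_⟩
  have hfin : ∀ M : Finset (Fin 5), (∀ v ∉ M, (∀ x ∈ M, (pathGraph 5).Adj v x) ∨
      ∀ x ∈ M, ¬ (pathGraph 5).Adj v x) → M.card ≤ 1 ∨ M = Finset.univ := by
    simp only [pathGraph_adj]
    decide
  obtain ⟨F, rfl⟩ := M.toFinite.exists_finset_coe
  rcases hfin F fun v hv => hM.2 v ⟨Set.mem_univ v, hv⟩ with h | rfl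
  · have hF : (F : Set (Fin 5)).encard ≤ 1 := by
      rw [Set.encard_coe_eq_coe_finsetCard]
      exact_mod_cast h
    exact (Set.encard_le_one_iff_eq.1 hF).imp_right Or.inr
  · exact Or.inr (Or.inl Finset.coe_univ)

lemma HasInducedP5On.pathGraph_isIndContained {G : SimpleGraph V} {S : Set V}
    (h : HasInducedP5On G S) : pathGraph 5 ⊴ G := by
  obtain ⟨a, b, c, d, e, -, -, -, -, -, hab, hac, had, hae, hbc, hbd, hbe, hcd, hce, hde,
    Aab, Abc, Acd, Ade, Nac, Nad, Nae, Nbd, Nbe, Nce⟩ := h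
  refine ⟨⟨⟨![a, b, c, d, e], fun i j hij => ?_⟩, fun {i j} => ?_⟩⟩
  · fin_cases i <;> fin_cases j <;> simp_all
  · change G.Adj (![a, b, c, d, e] i) (![a, b, c, d, e] j) ↔ _
    fin_cases i <;> fin_cases j <;> simp_all [pathGraph_adj, G.adj_comm]

namespace TwoStructure

variable {σ : TwoStructure V} {X Y M : Set V}

lemma IsModuleOn.inter_s17 {W : Set V} (hM : σ.IsModuleOn W M) {W' : Set V} (hW' : W' ⊆ W) :
    σ.IsModuleOn W' (M ∩ W') := by
  refine ⟨Set.inter_subset_right, ?_⟩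
  rintro x ⟨hxM, -⟩ y ⟨hyM, -⟩ v ⟨hvW', hv⟩
  exact hM.2 x hxM y hyM v ⟨hW' hvW', fun hvM => hv ⟨hvM, hvW'⟩⟩

lemma IsModuleOn.not_isPrimeOn {W W' : Set V} (hM : σ.IsModuleOn W M) (hW' : W' ⊆ W)
    {x y z : V} (hx : x ∈ M ∩ W') (hy : y ∈ M ∩ W') (hxy : x ≠ y) (hzW' : z ∈ W')
    (hzM : z ∉ M) : ¬ σ.IsPrimeOn W' := by
  rintro ⟨-, htriv⟩
  rcases htriv _ (hM.inter_s17 hW') with h | h | ⟨v, h⟩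
  · simp [h] at hx
  · exact hzM (h.symm ▸ hzW' : z ∈ M ∩ W').1
  · rw [h] at hx hy
    exact hxy (hx.trans hy.symm)

lemma isPrimeOn_of_isPrimeOn_image {W : Set V} {g : V → V} (hg : Function.Injective g)
    (hrel : ∀ x ∈ W, ∀ z ∈ W, x ≠ z → σ.rel (g x, g z) (x, z))
    (hp : σ.IsPrimeOn (g '' W)) : σ.IsPrimeOn W := by
  refine ⟨hg.injOn.encard_image ▸ hp.1, fun N hN => ?_⟩
  have hgN : σ.IsModuleOn (g '' W) (g '' N) := by
    refine ⟨Set.image_mono hN.1, ?_⟩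
    rintro _ ⟨x, hx, rfl⟩ _ ⟨y, hy, rfl⟩ _ ⟨⟨z, hz, rfl⟩, hzN⟩
    have hzN : z ∉ N := fun h => hzN ⟨z, h, rfl⟩
    have hxz : x ≠ z := by rintro rfl; exact hzN hx
    have hyz : y ≠ z := by rintro rfl; exact hzN hy
    have hxW := hN.1 hx
    have hyW := hN.1 hy
    obtain ⟨hxy₁, hxy₂⟩ := hN.2 x hx y hy z ⟨hz, hzN⟩
    exact ⟨σ.trans (hrel x hxW z hz hxz) (σ.trans hxy₁ (σ.symm (hrel y hyW z hz hyz))),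
      σ.trans (hrel z hz x hxW hxz.symm)
        (σ.trans hxy₂ (σ.symm (hrel z hz y hyW hyz.symm)))⟩
  rcases hp.2 _ hgN with h | h | ⟨v, h⟩
  · exact Or.inl (Set.image_eq_empty.1 h)
  · exact Or.inr (Or.inl (hg.image_injective h))
  · right; right
    obtain ⟨x, hx, rfl⟩ : v ∈ g '' N := h ▸ rfl
    exact ⟨x, hg.image_injective (h.trans Set.image_singleton.symm)⟩

/-- Two vertices of a module are interchangeable over any set outside it, since swapping them
preserves every class of `≡_σ` between such vertices. -/
lemma IsModuleOn.isPrimeOn_insert_of_isPrimeOn_insert {W S : Set V} (hM : σ.IsModuleOn W M)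
    {v v' : V} (hv : v ∈ M) (hv' : v' ∈ M) (hS : S ⊆ W \ M) (hp : σ.IsPrimeOn (insert v S)) :
    σ.IsPrimeOn (insert v' S) := by
  classical
  have hvS : v ∉ S := fun h => (hS h).2 hv
  have hv'S : v' ∉ S := fun h => (hS h).2 hv'
  have hfix : ∀ s ∈ S, Equiv.swap v v' s = s := fun s hs =>
    Equiv.swap_apply_of_ne_of_ne (by rintro rfl; exact hvS hs) (by rintro rfl; exact hv'S hs)
  refine isPrimeOn_of_isPrimeOn_image (Equiv.swap v v').injective ?_ ?_
  · rintro x (rfl | hx) z (rfl | hz) hxz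
    · exact absurd rfl hxz
    · rw [Equiv.swap_apply_right, hfix z hz]
      exact σ.symm (hM.2 _ hv' _ hv z (hS hz)).1
    · rw [Equiv.swap_apply_right, hfix x hx]
      exact σ.symm (hM.2 _ hv' _ hv x (hS hx)).2
    · rw [hfix x hx, hfix z hz]
      exact σ.refl _ hxz
  · rwa [Set.image_insert_eq, Equiv.swap_apply_right, Set.image_congr hfix, Set.image_id']

lemma IsModuleOn.graphIsModuleOn_outsideGraph (hM : σ.IsModuleOn (X ∪ Y) M)
    (hMX : M ∩ X = ∅) : GraphIsModuleOn (σ.outsideGraph X) Y M := by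
  have hXM : ∀ x ∈ X, x ∉ M := fun x hx hxM => (hMX ▸ ⟨hxM, hx⟩ : x ∈ (∅ : Set V))
  refine ⟨fun p hp => (hM.1 hp).resolve_left (hXM p · hp), fun w hw => ?_⟩
  by_cases hadj : ∃ p ∈ M, (σ.outsideGraph X).Adj w p
  · obtain ⟨p, hp, hwX, -, -, hprime⟩ := hadj
    refine Or.inl fun q hq => ⟨hwX, (hXM q · hq), fun h => hw.2 (h ▸ hq), ?_⟩
    have hS : X ∪ {w} ⊆ (X ∪ Y) \ M := by
      rintro z (hz | rfl)
      · exact ⟨Or.inl hz, hXM z hz⟩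
      · exact ⟨Or.inr hw.1, hw.2⟩
    rw [Set.pair_comm, Set.union_insert] at hprime ⊢
    exact hM.isPrimeOn_insert_of_isPrimeOn_insert hp hq hS hprime
  · exact Or.inr fun q hq hwq => hadj ⟨q, hq, hwq⟩

lemma IsModuleOn.eq_empty_or_singleton_of_inter_eq_empty (hM : σ.IsModuleOn (X ∪ Y) M)
    (hMX : M ∩ X = ∅) (hX : X.Nonempty) (hY : GraphIsPrimeOn (σ.outsideGraph X) Y) :
    M = ∅ ∨ ∃ v, M = {v} := by
  rcases hY.2 M (hM.graphIsModuleOn_outsideGraph hMX) with h | rfl | h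
  · exact Or.inl h
  · obtain ⟨x, hx⟩ := hX
    obtain ⟨y, hy⟩ : M.Nonempty := Set.encard_pos.1 (lt_of_lt_of_le (by norm_num) hY.1)
    obtain ⟨w, hw, hyw⟩ := hY.exists_adj hy
    exact absurd hyw.2.2.2 (hM.not_isPrimeOn (Set.union_subset_union_right X
      (Set.pair_subset hy hw)) ⟨hy, by simp⟩ ⟨hw, by simp⟩ hyw.ne (Or.inl hx)
      fun hxM => (hMX ▸ ⟨hxM, hx⟩ : x ∈ (∅ : Set V)))
  · exact Or.inr h

lemma IsModuleOn.eq_union_of_subset (hM : σ.IsModuleOn (X ∪ Y) M) (hXM : X ⊆ M)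
    (hX : 1 < X.encard) (hY : ∀ y ∈ Y, ∃ w ∈ Y, (σ.outsideGraph X).Adj y w) : M = X ∪ Y := by
  obtain ⟨x₁, x₂, hx₁, hx₂, hx₁₂⟩ := Set.one_lt_encard_iff.1 hX
  refine hM.1.antisymm (Set.union_subset hXM fun y hy => ?_)
  by_contra hyM
  obtain ⟨w, hw, hyw⟩ := hY y hy
  exact hM.not_isPrimeOn (Set.union_subset_union_right X (Set.pair_subset hy hw))
    ⟨hXM hx₁, Or.inl hx₁⟩ ⟨hXM hx₂, Or.inl hx₂⟩ hx₁₂ (Or.inr (Set.mem_insert y _)) hyM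
    hyw.2.2.2

lemma IsModuleOn.eq_singleton_of_inter_eq_singleton (hM : σ.IsModuleOn (X ∪ Y) M) {α : V}
    (hMX : M ∩ X = {α}) (hX : 1 < X.encard)
    (hY : ∀ y ∈ Y, ∃ w ∈ Y, (σ.outsideGraph X).Adj y w) : M = {α} := by
  have hα : α ∈ M ∩ X := hMX ▸ rfl
  obtain ⟨β, hβ, hβα⟩ := Set.exists_ne_of_one_lt_encard hX α
  refine Set.eq_singleton_iff_unique_mem.2 ⟨hα.1, fun v hv => by_contra fun hvα => ?_⟩
  have hvY : v ∈ Y :=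
    (hM.1 hv).resolve_left fun hvX => hvα (hMX ▸ ⟨hv, hvX⟩ : v ∈ ({α} : Set V))
  obtain ⟨w, hw, hvw⟩ := hY v hvY
  exact hM.not_isPrimeOn (Set.union_subset_union_right X (Set.pair_subset hvY hw))
    ⟨hα.1, Or.inl hα.2⟩ ⟨hv, Or.inr (Set.mem_insert v _)⟩ (Ne.symm hvα) (Or.inl hβ)
    (fun hβM => hβα (hMX ▸ ⟨hβM, hβ⟩ : β ∈ ({α} : Set V))) hvw.2.2.2

theorem isPrimeOn_union_of_graphIsPrimeOn (hXp : σ.IsPrimeOn X)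
    (hY : GraphIsPrimeOn (σ.outsideGraph X) Y) : σ.IsPrimeOn (X ∪ Y) := by
  have hX : 1 < X.encard := lt_of_lt_of_le (by norm_num) hXp.1
  have hYadj : ∀ y ∈ Y, ∃ w ∈ Y, (σ.outsideGraph X).Adj y w := fun y hy => hY.exists_adj hy
  refine ⟨hXp.1.trans (Set.encard_mono Set.subset_union_left), fun M hM => ?_⟩
  rcases hXp.2 _ (hM.inter_s17 Set.subset_union_left) with hMX | hMX | ⟨α, hMX⟩
  · exact (hM.eq_empty_or_singleton_of_inter_eq_empty hMX
      (Set.one_lt_encard_iff_nontrivial.1 hX).nonempty hY).imp_right Or.inr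
  · exact Or.inr (Or.inl (hM.eq_union_of_subset (hMX ▸ Set.inter_subset_left) hX hYadj))
  · exact Or.inr (Or.inr ⟨α, hM.eq_singleton_of_inter_eq_singleton hMX hX hYadj⟩)

end TwoStructure

theorem statement17_general (σ : TwoStructure V) (X : Set V)
    (hXp : σ.IsPrimeOn X)
    (hS5 : ∀ Y : Set V, Y ⊆ Xᶜ → Y.encard = 5 → ¬ σ.IsPrimeOn (X ∪ Y)) :
    ∀ C : Set V, σ.IsComponent X C →
      ¬ HasInducedP5On (σ.outsideGraph X) C := by
  rintro C - hP5
  obtain ⟨f⟩ := hP5.pathGraph_isIndContained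
  have hY := GraphIsPrimeOn.range f graphIsPrimeOn_pathGraph_five
  refine hS5 (Set.range f) ?_ ?_ (σ.isPrimeOn_union_of_graphIsPrimeOn hXp hY)
  · intro y hy
    obtain ⟨w, -, hyX, -⟩ := hY.exists_adj hy
    exact hyX
  · rw [← Set.image_univ, f.injective.injOn.encard_image]
    simp

/-- Lemma 4.3: under Statement (S5), no component of the outside graph contains
an induced `P₅`. -/
theorem statement17 (σ : TwoStructure V) (X : Set V) (hX : X ⊂ Set.univ)
    (hXp : σ.IsPrimeOn X)
    (hS5 : ∀ Y : Set V, Y ⊆ Xᶜ → Y.encard = 5 → ¬ σ.IsPrimeOn (X ∪ Y)) :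
    ∀ C : Set V, σ.IsComponent X C →
      ¬ HasInducedP5On (σ.outsideGraph X) C :=
  statement17_general σ X hXp hS5
end
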